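/- arXiv:0805.3688 — 3 statements merged into one kernel-verified Lean document; each statement's English description precedes it below -/
import Mathlib

section
/- Scalar-product separation of complete polar cones in EReal^n: Let W ⊆ (EReal^n)^2 be a complete polar cone and let s, t ∈ EReal^n be such that (s,t) ∉ W. Then there exists y ∈ EReal^n such that ⨆ i, (y_i + f_i) ≤ ⨆ j, (y_j + g_j) for every (f,g) ∈ W, while ¬( ⨆ i, (y_i + s_i) ≤ ⨆ j, (y_j + t_j) ). -/
open scoped Classical

noncomputable section

/-- Vectors of the semimodule `EReal^n` over the completed max-plus
semiring `EReal = ℝ ∪ {±∞}`. -/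
abbrev EVec (n : ℕ) := Fin n → EReal

/-- `W ⊆ (EReal^n)² ≅ EReal^{2n}` is a complete subsemimodule (with the
entrywise operations): it is stable under entrywise max, under the entrywise
addition of any scalar, and under arbitrary (entrywise) suprema. -/
def IsCompleteSubsemimoduleE {n : ℕ} (W : Set (EVec n × EVec n)) : Prop :=
  (∀ p ∈ W, ∀ q ∈ W, p ⊔ q ∈ W) ∧
  (∀ p ∈ W, ∀ lam : EReal,
    ((fun i => p.1 i + lam, fun i => p.2 i + lam) : EVec n × EVec n) ∈ W) ∧
  (∀ Q : Set (EVec n × EVec n), Q ⊆ W → sSup Q ∈ W)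

/-- A complete pre-congruence: a complete subsemimodule of `(EReal^n)²`
containing the diagonal and transitive. -/
def IsCompletePrecongruenceE {n : ℕ} (W : Set (EVec n × EVec n)) : Prop :=
  IsCompleteSubsemimoduleE W ∧ (∀ f : EVec n, (f, f) ∈ W) ∧
    ∀ f g h : EVec n, (f, g) ∈ W → (g, h) ∈ W → (f, h) ∈ W

/-- A complete polar cone: a complete pre-congruence such that `f ≤ g`
implies `(f,g) ∈ W`. -/
def IsCompletePolarConeE {n : ℕ} (W : Set (EVec n × EVec n)) : Prop :=
  IsCompletePrecongruenceE W ∧ ∀ f g : EVec n, f ≤ g → (f, g) ∈ W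

/-- A complete congruence: a symmetric complete pre-congruence. -/
def IsCompleteCongruenceE {n : ℕ} (W : Set (EVec n × EVec n)) : Prop :=
  IsCompletePrecongruenceE W ∧ ∀ f g : EVec n, (f, g) ∈ W → (g, f) ∈ W

/-- The entrywise supremum `ē(g) = sSup { f | (f,g) ∈ W }`. -/
def ebarE {n : ℕ} (W : Set (EVec n × EVec n)) (g : EVec n) : EVec n :=
  sSup { f : EVec n | (f, g) ∈ W }

/-- The residuation `u∖x = sSup { λ | ∀ i, u_i + λ ≤ x_i }` in `EReal`. -/
def eresE {n : ℕ} (u x : EVec n) : EReal :=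
  sSup { lam : EReal | ∀ i, u i + lam ≤ x i }

/-!
Let `v = ē(t)` be the largest `f` with `(f, t) ∈ W`; for a complete polar cone, `(f, t) ∈ W`
exactly when `f ≤ v`. The separating vector is `y = -v`: for real `μ`, `⟨-v, x⟩ ≤ μ` says
`x ≤ v + μ`, and this sublevel condition is inherited from `g` by `f` whenever `(f, g) ∈ W`,
because `g ≤ v + μ` and `(v + μ, t + μ) ∈ W` give `(f - μ, t) ∈ W`. Since `t ≤ v` but `s ≰ v`,
the level `μ = 0` separates `(s, t)`.
-/

namespace EReal

lemma neg_add_le_coe_iff {a b : EReal} {μ : ℝ} : -a + b ≤ μ ↔ b ≤ a + μ := by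
  rw [add_comm, ← sub_eq_add_neg, sub_le_iff_le_add (.inr (coe_ne_top μ)) (.inr (coe_ne_bot μ)),
    add_comm]

lemma iSup_neg_add_le_coe_iff {ι : Type*} {v x : ι → EReal} {μ : ℝ} :
    (⨆ i, -v i + x i) ≤ μ ↔ ∀ i, x i ≤ v i + μ := by
  simp only [iSup_le_iff, neg_add_le_coe_iff]

end EReal

section PolarCone

variable {n : ℕ} {W : Set (EVec n × EVec n)}

lemma IsCompletePrecongruenceE.ebarE_mem (hW : IsCompletePrecongruenceE W) (t : EVec n) :
    (ebarE W t, t) ∈ W := by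
  obtain ⟨⟨-, -, hsSup⟩, hdiag, -⟩ := hW
  let Q := {p ∈ W | p.2 = t}
  have hfst : Prod.fst '' Q = {f | (f, t) ∈ W} := by
    ext f
    constructor
    · rintro ⟨p, ⟨hp, rfl⟩, rfl⟩
      exact hp
    · exact fun hf => ⟨(f, t), ⟨hf, rfl⟩, rfl⟩
  have hsnd : Prod.snd '' Q = {t} := by
    refine Set.eq_singleton_iff_nonempty_unique_mem.mpr ⟨⟨t, (t, t), ⟨hdiag t, rfl⟩, rfl⟩, ?_⟩
    rintro _ ⟨p, ⟨-, hpt⟩, rfl⟩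
    exact hpt
  have hQ : sSup Q = (ebarE W t, t) := by
    rw [Prod.ext_iff, Prod.fst_sSup, Prod.snd_sSup, hfst, hsnd, sSup_singleton]
    exact ⟨rfl, rfl⟩
  exact hQ ▸ hsSup Q fun p hp => hp.1

lemma IsCompletePolarConeE.mem_iff_le_ebarE (hW : IsCompletePolarConeE W) {f t : EVec n} :
    (f, t) ∈ W ↔ f ≤ ebarE W t :=
  ⟨fun h => le_sSup h, fun h => hW.1.2.2 _ _ _ (hW.2 _ _ h) (hW.1.ebarE_mem t)⟩

lemma IsCompletePolarConeE.le_ebarE_add_coe_of_mem (hW : IsCompletePolarConeE W)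
    {f g t : EVec n} (hfg : (f, g) ∈ W) {μ : ℝ} (hg : ∀ i, g i ≤ ebarE W t i + μ) (i : Fin n) :
    f i ≤ ebarE W t i + μ := by
  have hvt := hW.1.ebarE_mem t
  have hmem_iff := @hW.mem_iff_le_ebarE
  obtain ⟨⟨⟨-, hshift, -⟩, -, htrans⟩, hle⟩ := hW
  have hft : (f, t + fun _ => (μ : EReal)) ∈ W :=
    htrans _ _ _ hfg (htrans _ _ _ (hle _ _ hg) (hshift _ hvt μ))
  have hback := hshift _ hft (-μ)
  simp only [Pi.add_apply, ← sub_eq_add_neg, EReal.add_sub_cancel_right] at hback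
  rw [← EReal.sub_le_iff_le_add (.inl (EReal.coe_ne_bot μ)) (.inl (EReal.coe_ne_top μ))]
  exact hmem_iff.mp hback i

end PolarCone

/-- Corollary 3.7 of the paper, specialized to the reflexive semiring `EReal`,
`X = Y = EReal^n` and the bracket `⟨y,x⟩ = ⨆ i, (y_i + x_i)`: scalar-product
separation of a point from a complete polar cone. -/
theorem scalar_separation_complete_polar_cone (n : ℕ)
    (W : Set (EVec n × EVec n)) (hW : IsCompletePolarConeE W)
    (s t : EVec n) (hst : (s, t) ∉ W) :
    ∃ y : EVec n,
      (∀ p ∈ W, (⨆ i, y i + p.1 i) ≤ ⨆ i, y i + p.2 i) ∧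
      ¬ (⨆ i, y i + s i) ≤ ⨆ i, y i + t i := by
  set v := ebarE W t
  refine ⟨fun i => -v i, fun p hp => ?_, fun hs => hst ?_⟩
  · refine EReal.le_of_forall_lt_iff_le.mp fun μ hμ => ?_
    exact EReal.iSup_neg_add_le_coe_iff.mpr
      (hW.le_ebarE_add_coe_of_mem hp (EReal.iSup_neg_add_le_coe_iff.mp hμ.le))
  · have ht : (⨆ i, -v i + t i) ≤ ((0 : ℝ) : EReal) :=
      EReal.iSup_neg_add_le_coe_iff.mpr fun i => by
        simpa using (hW.mem_iff_le_ebarE.mp (hW.2 t t le_rfl)) i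
    have hsv := EReal.iSup_neg_add_le_coe_iff.mp (hs.trans ht)
    exact hW.mem_iff_le_ebarE.mpr fun i => by simpa using hsv i
end
end

section
/- Scalar-product separation of complete congruences in EReal^n: Let W ⊆ (EReal^n)^2 be a complete congruence and let s, t ∈ EReal^n be such that (s,t) ∉ W. Then there exists y ∈ EReal^n such that ⨆ i, (y_i + f_i) = ⨆ j, (y_j + g_j) for every (f,g) ∈ W, while ⨆ i, (y_i + s_i) ≠ ⨆ j, (y_j + t_j). -/
/-!
Let `ē g` be the top of the `W`-class of `g`. For a congruence, `(f, g) ∈ W` iff `ē f = ē g`, so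
`ē s ≠ ē t`, say `ē t i < ē s i`; take `y = -v` with `v = ē t`. Since `ē v = v`, `ē` is monotone
and `ē (v + μ) ≤ ē v + μ` for real `μ`, the bound `f ≤ v + μ` forces `ē f ≤ v + μ`; hence
`⟨-v, f⟩ = ⟨-v, ē f⟩`, so the bracket is constant on `W`-classes, while
`⟨-v, t⟩ = ⟨-v, v⟩ ≤ 0 < ⟨-v, ē s⟩ = ⟨-v, s⟩`.
-/

open scoped Classical

noncomputable section

def bracketE {n : ℕ} (y x : EVec n) : EReal :=
  ⨆ i, y i + x i

section Bracket

variable {n : ℕ}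

theorem bracketE_mono_right (y : EVec n) : Monotone (bracketE y) :=
  fun _ _ hfg => iSup_mono fun i => add_le_add le_rfl (hfg i)

theorem bracketE_neg (v f : EVec n) : bracketE (-v) f = ⨆ i, f i - v i := by
  simp only [bracketE, Pi.neg_apply, sub_eq_add_neg, add_comm]

/-- `μ` must be real: for `μ = ⊤` and `v i = ⊥` this fails, as `⊥ + ⊤ = ⊥`. -/
theorem bracketE_neg_le_coe_iff (v f : EVec n) (μ : ℝ) :
    bracketE (-v) f ≤ μ ↔ f ≤ fun i => v i + μ := by
  simp only [bracketE_neg, iSup_le_iff, Pi.le_def]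
  refine forall_congr' fun i => ?_
  rw [EReal.sub_le_iff_le_add (.inr (EReal.coe_ne_top μ)) (.inr (EReal.coe_ne_bot μ)), add_comm]

theorem bracketE_neg_self_nonpos (v : EVec n) : bracketE (-v) v ≤ 0 :=
  (bracketE_neg v v).trans_le <| iSup_le fun _ => EReal.sub_self_le_zero

theorem bracketE_neg_pos_of_lt {v f : EVec n} {i : Fin n} (h : v i < f i) :
    0 < bracketE (-v) f :=
  (EReal.sub_pos.2 h).trans_le <| (bracketE_neg v f).symm ▸ le_iSup (fun i => f i - v i) i

end Bracket

theorem le_ebarE_of_mem {n : ℕ} {W : Set (EVec n × EVec n)} {f g : EVec n} (h : (f, g) ∈ W) :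
    f ≤ ebarE W g :=
  le_sSup h

namespace IsCompletePrecongruenceE

variable {n : ℕ} {W : Set (EVec n × EVec n)} (hW : IsCompletePrecongruenceE W)
include hW

theorem ebarE_mem_s18 (g : EVec n) : (ebarE W g, g) ∈ W := by
  set S := {f : EVec n | (f, g) ∈ W}
  have hS : S.Nonempty := ⟨g, hW.2.1 g⟩
  have hsup : sSup ((·, g) '' S) = (ebarE W g, g) := by
    refine Prod.ext ?_ ?_
    · rw [Prod.fst_sSup, Set.image_image, Set.image_id', ebarE]
    · rw [Prod.snd_sSup, Set.image_image, hS.image_const, sSup_singleton]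
  rw [← hsup]
  exact hW.1.2.2 _ (Set.image_subset_iff.2 fun _ hf => hf)

theorem le_ebarE (g : EVec n) : g ≤ ebarE W g :=
  le_ebarE_of_mem (hW.2.1 g)

theorem ebarE_le_ebarE_of_mem {f g : EVec n} (h : (f, g) ∈ W) : ebarE W f ≤ ebarE W g :=
  sSup_le fun _ hu => le_ebarE_of_mem (hW.2.2 _ _ _ hu h)

theorem ebarE_ebarE (g : EVec n) : ebarE W (ebarE W g) = ebarE W g :=
  (hW.ebarE_le_ebarE_of_mem (hW.ebarE_mem_s18 g)).antisymm (hW.le_ebarE _)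

theorem ebarE_mono : Monotone (ebarE W) := fun f g hfg => by
  have h := hW.1.1 _ (hW.ebarE_mem_s18 f) _ (hW.ebarE_mem_s18 g)
  rw [Prod.mk_sup_mk, sup_eq_right.2 hfg] at h
  exact le_sup_left.trans (le_ebarE_of_mem h)

theorem ebarE_add_coe_le (g : EVec n) (μ : ℝ) :
    ebarE W (fun i => g i + μ) ≤ fun i => ebarE W g i + μ := by
  have h := hW.1.2.1 _ (hW.ebarE_mem_s18 fun i => g i + μ) (-μ)
  simp only [← sub_eq_add_neg, EReal.add_sub_cancel_right] at h
  exact fun i => (EReal.sub_le_iff_le_add (.inl (EReal.coe_ne_bot μ))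
    (.inl (EReal.coe_ne_top μ))).1 (le_ebarE_of_mem h i)

theorem bracketE_neg_ebarE {v : EVec n} (hv : ebarE W v = v) (f : EVec n) :
    bracketE (-v) (ebarE W f) = bracketE (-v) f := by
  refine le_antisymm (EReal.le_of_forall_lt_iff_le.1 fun μ hμ => ?_)
    (bracketE_mono_right _ (hW.le_ebarE f))
  rw [bracketE_neg_le_coe_iff]
  calc ebarE W f ≤ ebarE W (fun i => v i + μ) :=
        hW.ebarE_mono ((bracketE_neg_le_coe_iff ..).1 hμ.le)
    _ ≤ fun i => ebarE W v i + μ := hW.ebarE_add_coe_le v μ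
    _ = fun i => v i + μ := by rw [hv]

theorem bracketE_neg_ebarE_lt {s t : EVec n} {i : Fin n} (h : ebarE W t i < ebarE W s i) :
    bracketE (-ebarE W t) t < bracketE (-ebarE W t) s := by
  have hv := hW.ebarE_ebarE t
  rw [← hW.bracketE_neg_ebarE hv t, ← hW.bracketE_neg_ebarE hv s]
  exact (bracketE_neg_self_nonpos _).trans_lt (bracketE_neg_pos_of_lt h)

end IsCompletePrecongruenceE

namespace IsCompleteCongruenceE

variable {n : ℕ} {W : Set (EVec n × EVec n)} (hW : IsCompleteCongruenceE W)
include hW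

theorem mem_iff_ebarE_eq {f g : EVec n} : (f, g) ∈ W ↔ ebarE W f = ebarE W g := by
  refine ⟨fun h => (hW.1.ebarE_le_ebarE_of_mem h).antisymm
    (hW.1.ebarE_le_ebarE_of_mem (hW.2 _ _ h)), fun h => ?_⟩
  have hf : (f, ebarE W g) ∈ W := h ▸ hW.2 _ _ (hW.1.ebarE_mem_s18 f)
  exact hW.1.2.2 _ _ _ hf (hW.1.ebarE_mem_s18 g)

theorem bracketE_neg_ebarE_eq_of_mem (g : EVec n) {p : EVec n × EVec n} (hp : p ∈ W) :
    bracketE (-ebarE W g) p.1 = bracketE (-ebarE W g) p.2 := by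
  have hv := hW.1.ebarE_ebarE g
  rw [← hW.1.bracketE_neg_ebarE hv p.1, ← hW.1.bracketE_neg_ebarE hv p.2,
    hW.mem_iff_ebarE_eq.1 hp]

end IsCompleteCongruenceE

/-- Corollary 3.5 of the paper, specialized to the reflexive semiring `EReal`,
`X = Y = EReal^n` and the bracket `⟨y,x⟩ = ⨆ i, (y_i + x_i)`: scalar-product
separation of a point from a complete congruence. -/
theorem scalar_separation_complete_congruence (n : ℕ)
    (W : Set (EVec n × EVec n)) (hW : IsCompleteCongruenceE W)
    (s t : EVec n) (hst : (s, t) ∉ W) :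
    ∃ y : EVec n,
      (∀ p ∈ W, (⨆ i, y i + p.1 i) = ⨆ i, y i + p.2 i) ∧
      (⨆ i, y i + s i) ≠ ⨆ i, y i + t i := by
  obtain ⟨i, hi⟩ := Function.ne_iff.1 fun h => hst (hW.mem_iff_ebarE_eq.2 h)
  rcases hi.lt_or_gt with h | h
  · exact ⟨-ebarE W s, fun p => hW.bracketE_neg_ebarE_eq_of_mem s,
      (hW.1.bracketE_neg_ebarE_lt h).ne⟩
  · exact ⟨-ebarE W t, fun p => hW.bracketE_neg_ebarE_eq_of_mem t,
      (hW.1.bracketE_neg_ebarE_lt h).ne'⟩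
end
end

section
/- For every subset U ⊆ (ℝmax^n)^2, the set (U⋄)° is the smallest closed polar cone containing U: (U⋄)° is a closed polar cone, U ⊆ (U⋄)°, and (U⋄)° ⊆ W for every closed polar cone W with U ⊆ W. Analogously, (U⊤)⊥ is the smallest closed congruence containing U. -/
open scoped Classical

noncomputable section

/-- The max-plus semiring `ℝmax = ℝ ∪ {-∞}`. Its `Add` is the max-plus
"multiplication" `a ⊗ b = a + b` (with `-∞` absorbing), its `max` is the
max-plus "addition". -/
abbrev Rmax := WithBot ℝ

/-- The order topology on `WithBot ℝ` (the topology of the metric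
`d(a,b) = |exp a - exp b|`). -/
instance : TopologicalSpace Rmax := Preorder.topology Rmax
instance : OrderTopology Rmax := ⟨rfl⟩

/-- Vectors of the max-plus semimodule `ℝmax^n`. -/
abbrev RmaxVec (n : ℕ) := Fin n → Rmax

/-- The max-plus linear combination `xλ ⊕ yμ`. -/
def maxComb {n : ℕ} (x y : RmaxVec n) (lam mu : Rmax) : RmaxVec n :=
  fun i => max (x i + lam) (y i + mu)

/-- `V ⊆ ℝmax^n` is a (max-plus) subsemimodule. -/
def IsSubsemimodule {n : ℕ} (V : Set (RmaxVec n)) : Prop :=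
  ∀ x ∈ V, ∀ y ∈ V, ∀ lam mu : Rmax, maxComb x y lam mu ∈ V

/-- `W ⊆ (ℝmax^n)² ≅ ℝmax^{2n}` is a (max-plus) subsemimodule,
with the entrywise operations. -/
def IsSubsemimodulePair {n : ℕ} (W : Set (RmaxVec n × RmaxVec n)) : Prop :=
  ∀ p ∈ W, ∀ q ∈ W, ∀ lam mu : Rmax,
    (maxComb p.1 q.1 lam mu, maxComb p.2 q.2 lam mu) ∈ W

/-- A pre-congruence: a subsemimodule of `(ℝmax^n)²` containing the diagonal
and transitive. -/
def IsPrecongruence {n : ℕ} (W : Set (RmaxVec n × RmaxVec n)) : Prop :=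
  IsSubsemimodulePair W ∧ (∀ f : RmaxVec n, (f, f) ∈ W) ∧
    ∀ f g h : RmaxVec n, (f, g) ∈ W → (g, h) ∈ W → (f, h) ∈ W

/-- A polar cone: a pre-congruence such that `f ≤ g` implies `(f,g) ∈ W`. -/
def IsPolarCone {n : ℕ} (W : Set (RmaxVec n × RmaxVec n)) : Prop :=
  IsPrecongruence W ∧ ∀ f g : RmaxVec n, f ≤ g → (f, g) ∈ W

/-- A congruence: a symmetric pre-congruence. -/
def IsCongruence {n : ℕ} (W : Set (RmaxVec n × RmaxVec n)) : Prop :=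
  IsPrecongruence W ∧ ∀ f g : RmaxVec n, (f, g) ∈ W → (g, f) ∈ W

/-- The max-plus bracket `⟨y, x⟩ = max_i (y_i + x_i)`. -/
def mpBracket {n : ℕ} (y x : RmaxVec n) : Rmax :=
  Finset.univ.sup fun i => y i + x i

/-- The polar `V°` of `V ⊆ ℝmax^n`. -/
def mpPolar {n : ℕ} (V : Set (RmaxVec n)) : Set (RmaxVec n × RmaxVec n) :=
  { p | ∀ x ∈ V, mpBracket p.1 x ≤ mpBracket p.2 x }

/-- The orthogonal `V⊥` of `V ⊆ ℝmax^n`. -/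
def mpOrtho {n : ℕ} (V : Set (RmaxVec n)) : Set (RmaxVec n × RmaxVec n) :=
  { p | ∀ x ∈ V, mpBracket p.1 x = mpBracket p.2 x }

/-- The dual polar `W⋄` of `W ⊆ (ℝmax^n)²`. -/
def mpDiamond {n : ℕ} (W : Set (RmaxVec n × RmaxVec n)) : Set (RmaxVec n) :=
  { x | ∀ p ∈ W, mpBracket p.1 x ≤ mpBracket p.2 x }

/-- The dual orthogonal `W⊤` of `W ⊆ (ℝmax^n)²`. -/
def mpTop {n : ℕ} (W : Set (RmaxVec n × RmaxVec n)) : Set (RmaxVec n) :=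
  { x | ∀ p ∈ W, mpBracket p.1 x = mpBracket p.2 x }

/-!
For a closed polar cone `W` and a vector `g` with finite entries, the section
`{w | (w, g) ∈ W}` is closed, downward closed and closed under `⊕`, hence a max-plus half-space
`{w | ⟨w, x⟩ ≤ 0}`, where `x j` is minus the largest admissible `j`-th entry (`⊥` if unbounded).
Scaling pairs of `W` shows `x ∈ W⋄`, so a pair `(f, g) ∈ (W⋄)°` lies in `W`; closedness lets one
first replace `g` by a finite `g ⊕ r`. A closed congruence `W` is recovered from the closed polar
cone `{(f, g) | (f ⊕ g, g) ∈ W}`, whose dual is `W⊤`.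
-/

open Filter Topology Function Set

namespace Rmax

lemma continuous_coe : Continuous ((↑) : ℝ → Rmax) :=
  continuous_iff_continuousAt.2 fun r =>
    (WithBot.coe_strictMono.strictMonoOn univ).continuousAt_of_image_mem_nhds univ_mem <|
      mem_of_superset (Ioi_mem_nhds (WithBot.bot_lt_coe r)) fun a ha => by
        obtain ⟨s, rfl⟩ := WithBot.ne_bot_iff_exists.1 (mem_Ioi.1 ha).ne'
        exact mem_image_of_mem _ (mem_univ s)

lemma tendsto_coe_atBot : Tendsto ((↑) : ℝ → Rmax) atBot (𝓝 ⊥) := by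
  refine tendsto_order.2 ⟨fun a ha => (not_lt_bot ha).elim, fun a ha => ?_⟩
  obtain ⟨r, rfl⟩ := WithBot.ne_bot_iff_exists.1 ha.ne'
  filter_upwards [eventually_lt_atBot r] with s hs
  exact WithBot.coe_lt_coe.2 hs

lemma continuous_add_const (c : Rmax) : Continuous fun a : Rmax => a + c := by
  induction c using WithBot.recBotCoe with
  | bot => simpa only [WithBot.add_bot] using continuous_const
  | coe r =>
    convert ((OrderIso.addRight r).withBotCongr).continuous using 1
    funext a
    induction a using WithBot.recBotCoe with
    | bot => rfl
    | coe s => exact (WithBot.coe_add s r).symm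

lemma le_of_forall_add_nonpos {a b : Rmax} (h : ∀ r : ℝ, b + r ≤ 0 → a + r ≤ 0) : a ≤ b := by
  induction b using WithBot.recBotCoe with
  | bot =>
    induction a using WithBot.recBotCoe with
    | bot => exact le_rfl
    | coe s =>
      have := h (1 - s) (by simp)
      norm_cast at this
      linarith
  | coe t =>
    have := h (-t) (by norm_cast; simp)
    induction a using WithBot.recBotCoe with
    | bot => exact bot_le
    | coe s =>
      norm_cast at this ⊢
      linarith

end Rmax

section Bracket

variable {n : ℕ}

lemma mpBracket_le_iff {y x : RmaxVec n} {a : Rmax} : mpBracket y x ≤ a ↔ ∀ i, y i + x i ≤ a := by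
  simp [mpBracket]

lemma mpBracket_mono_left (x : RmaxVec n) : Monotone fun y => mpBracket y x :=
  fun _ _ h => Finset.sup_mono_fun fun i _ => add_le_add_left (h i) _

lemma mpBracket_sup_left (y y' x : RmaxVec n) :
    mpBracket (y ⊔ y') x = mpBracket y x ⊔ mpBracket y' x := by
  simp only [mpBracket, ← Finset.sup_sup]
  exact Finset.sup_congr rfl fun i _ => (max_add_add_right _ _ _).symm

lemma mpBracket_add_const (y x : RmaxVec n) (l : Rmax) :
    mpBracket (fun i => y i + l) x = mpBracket y x + l := by
  unfold mpBracket
  rw [Finset.apply_sup_eq_sup_comp_of_linearOrder (· + l) (fun _ _ h => add_le_add_left h l)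
    (WithBot.bot_add l)]
  exact Finset.sup_congr rfl fun i _ => add_right_comm _ _ _

lemma maxComb_eq_sup (x y : RmaxVec n) (lam mu : Rmax) :
    maxComb x y lam mu = (fun i => x i + lam) ⊔ fun i => y i + mu := rfl

lemma mpBracket_maxComb (u v x : RmaxVec n) (lam mu : Rmax) :
    mpBracket (maxComb u v lam mu) x = (mpBracket u x + lam) ⊔ (mpBracket v x + mu) := by
  rw [maxComb_eq_sup, mpBracket_sup_left, mpBracket_add_const, mpBracket_add_const]

lemma continuous_mpBracket_left (x : RmaxVec n) : Continuous fun y : RmaxVec n => mpBracket y x :=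
  Continuous.finset_sup_apply fun i _ => (Rmax.continuous_add_const (x i)).comp (continuous_apply i)

end Bracket

namespace IsPrecongruence

variable {n : ℕ} {W : Set (RmaxVec n × RmaxVec n)} (hW : IsPrecongruence W)
include hW

lemma refl (f : RmaxVec n) : (f, f) ∈ W := hW.2.1 f

lemma trans {f g h : RmaxVec n} (hfg : (f, g) ∈ W) (hgh : (g, h) ∈ W) : (f, h) ∈ W :=
  hW.2.2 f g h hfg hgh

lemma add_const_mem {u v : RmaxVec n} (h : (u, v) ∈ W) (l : Rmax) :
    ((fun i => u i + l), fun i => v i + l) ∈ W := by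
  simpa only [maxComb_eq_sup, sup_idem] using hW.1 _ h _ h l l

lemma sup_mem {u v u' v' : RmaxVec n} (h : (u, v) ∈ W) (h' : (u', v') ∈ W) :
    (u ⊔ u', v ⊔ v') ∈ W := by
  simpa only [maxComb_eq_sup, add_zero] using hW.1 _ h _ h' 0 0

end IsPrecongruence

section Sublevel

variable {n : ℕ} {D : Set (RmaxVec n)}

lemma mem_iff_forall_update_bot_mem (hlow : IsLowerSet D) (hsup : SupClosed D) (hbot : ⊥ ∈ D)
    {w : RmaxVec n} : w ∈ D ↔ ∀ j, update ⊥ j (w j) ∈ D := by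
  refine ⟨fun hw j => hlow (update_le_iff.2 ⟨le_rfl, fun _ _ => bot_le⟩) hw, fun h => ?_⟩
  refine hlow (fun i => ?_) (Finset.sup_induction hbot (fun a ha b hb => hsup ha hb)
    (fun j _ => h j) (s := Finset.univ))
  simpa using Finset.le_sup (f := fun j => update (⊥ : RmaxVec n) j (w j)) (Finset.mem_univ i) i

lemma exists_update_bot_mem_iff (hcl : IsClosed D) (hlow : IsLowerSet D) (hbot : ⊥ ∈ D) (j : Fin n)
    {r₀ : ℝ} (hr₀ : update ⊥ j (r₀ : Rmax) ∈ D) :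
    ∃ c : Rmax, ∀ a : Rmax, update ⊥ j a ∈ D ↔ a + c ≤ 0 := by
  set B : Set ℝ := {r | update ⊥ j (r : Rmax) ∈ D}
  have hbot' : update ⊥ j ⊥ ∈ D := by convert hbot; exact update_eq_self j _
  by_cases hB : BddAbove B
  · have hmem : sSup B ∈ B :=
      (hcl.preimage (continuous_const.update j Rmax.continuous_coe)).csSup_mem ⟨r₀, hr₀⟩ hB
    refine ⟨((-sSup B : ℝ) : Rmax), fun a => ?_⟩
    induction a using WithBot.recBotCoe with
    | bot => simpa using hbot'
    | coe r =>
      have : r ∈ B ↔ r ≤ sSup B :=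
        ⟨fun h => le_csSup hB h,
          fun h => hlow (update_le_update_iff'.2 (WithBot.coe_le_coe.2 h)) hmem⟩
      rw [show update ⊥ j (r : Rmax) ∈ D ↔ r ∈ B from Iff.rfl, this]
      norm_cast
      constructor <;> intro <;> linarith
  · refine ⟨⊥, fun a => ⟨fun _ => by simp, fun _ => ?_⟩⟩
    induction a using WithBot.recBotCoe with
    | bot => simpa using hbot'
    | coe r =>
      obtain ⟨s, hs, hrs⟩ := not_bddAbove_iff.1 hB r
      exact hlow (update_le_update_iff'.2 (WithBot.coe_le_coe.2 hrs.le)) hs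

theorem exists_forall_mem_iff_mpBracket_nonpos (hcl : IsClosed D) (hlow : IsLowerSet D)
    (hsup : SupClosed D) {g : RmaxVec n} (hg : g ∈ D) (hfin : ∀ i, g i ≠ ⊥) :
    ∃ x : RmaxVec n, ∀ w, w ∈ D ↔ mpBracket w x ≤ 0 := by
  have hbot : ⊥ ∈ D := hlow bot_le hg
  have hcoord (j : Fin n) : ∃ c : Rmax, ∀ a : Rmax, update ⊥ j a ∈ D ↔ a + c ≤ 0 := by
    obtain ⟨r₀, hr₀⟩ := WithBot.ne_bot_iff_exists.1 (hfin j)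
    exact exists_update_bot_mem_iff hcl hlow hbot j
      (hlow (update_le_iff.2 ⟨hr₀.le, fun _ _ => bot_le⟩) hg)
  choose x hx using hcoord
  refine ⟨x, fun w => ?_⟩
  rw [mem_iff_forall_update_bot_mem hlow hsup hbot, mpBracket_le_iff]
  exact forall_congr' fun j => hx j (w j)

end Sublevel

section Duality

variable {n : ℕ}

lemma isClosed_mpPolar (V : Set (RmaxVec n)) : IsClosed (mpPolar V) := by
  simp only [mpPolar, ofPred_forall]
  exact isClosed_biInter fun x _ => isClosed_le
    ((continuous_mpBracket_left x).comp continuous_fst)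
    ((continuous_mpBracket_left x).comp continuous_snd)

lemma isClosed_mpOrtho (V : Set (RmaxVec n)) : IsClosed (mpOrtho V) := by
  simp only [mpOrtho, ofPred_forall]
  exact isClosed_biInter fun x _ => isClosed_eq
    ((continuous_mpBracket_left x).comp continuous_fst)
    ((continuous_mpBracket_left x).comp continuous_snd)

lemma isPolarCone_mpPolar (V : Set (RmaxVec n)) : IsPolarCone (mpPolar V) := by
  refine ⟨⟨fun p hp q hq lam mu x hx => ?_, fun f x _ => le_rfl,
    fun f g h hfg hgh x hx => (hfg x hx).trans (hgh x hx)⟩,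
    fun f g hfg x _ => mpBracket_mono_left x hfg⟩
  rw [mpBracket_maxComb, mpBracket_maxComb]
  exact sup_le_sup (add_le_add_left (hp x hx) _) (add_le_add_left (hq x hx) _)

lemma isCongruence_mpOrtho (V : Set (RmaxVec n)) : IsCongruence (mpOrtho V) := by
  refine ⟨⟨fun p hp q hq lam mu x hx => ?_, fun f x _ => rfl,
    fun f g h hfg hgh x hx => (hfg x hx).trans (hgh x hx)⟩,
    fun f g hfg x hx => (hfg x hx).symm⟩
  rw [mpBracket_maxComb, mpBracket_maxComb, hp x hx, hq x hx]

lemma subset_mpPolar_mpDiamond (U : Set (RmaxVec n × RmaxVec n)) :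
    U ⊆ mpPolar (mpDiamond U) :=
  fun p hp _ hx => hx p hp

lemma subset_mpOrtho_mpTop (U : Set (RmaxVec n × RmaxVec n)) : U ⊆ mpOrtho (mpTop U) :=
  fun p hp _ hx => hx p hp

lemma mpPolar_mpDiamond_mono {U W : Set (RmaxVec n × RmaxVec n)} (h : U ⊆ W) :
    mpPolar (mpDiamond U) ⊆ mpPolar (mpDiamond W) :=
  fun _ hp x hx => hp x fun q hq => hx q (h hq)

lemma mpOrtho_mpTop_mono {U W : Set (RmaxVec n × RmaxVec n)} (h : U ⊆ W) :
    mpOrtho (mpTop U) ⊆ mpOrtho (mpTop W) :=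
  fun _ hp x hx => hp x fun q hq => hx q (h hq)

lemma IsPrecongruence.mem_mpDiamond {W : Set (RmaxVec n × RmaxVec n)} (hW : IsPrecongruence W)
    {g x : RmaxVec n} (hx : ∀ w, (w, g) ∈ W ↔ mpBracket w x ≤ 0) : x ∈ mpDiamond W := by
  rintro ⟨u, v⟩ huv
  refine Rmax.le_of_forall_add_nonpos fun r hv => ?_
  rw [← mpBracket_add_const] at hv ⊢
  exact (hx _).1 (hW.trans (hW.add_const_mem huv r) ((hx _).2 hv))

lemma exists_sup_const_notMem {W : Set (RmaxVec n × RmaxVec n)} (hW : IsClosed W)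
    {f g : RmaxVec n} (hfg : (f, g) ∉ W) : ∃ r : ℝ, (f, g ⊔ fun _ => (r : Rmax)) ∉ W := by
  by_contra! h
  refine hfg (hW.mem_of_tendsto (tendsto_const_nhds.prodMk_nhds ?_)
    (Eventually.of_forall (f := atBot) h))
  refine tendsto_pi_nhds.2 fun i => ?_
  simpa using (tendsto_const_nhds (x := g i)).max Rmax.tendsto_coe_atBot

theorem IsPolarCone.mpPolar_mpDiamond_subset {W : Set (RmaxVec n × RmaxVec n)}
    (hcl : IsClosed W) (hW : IsPolarCone W) : mpPolar (mpDiamond W) ⊆ W := by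
  rintro ⟨f, g⟩ hfg
  by_contra hnot
  obtain ⟨r, hr⟩ := exists_sup_const_notMem hcl hnot
  set g' : RmaxVec n := g ⊔ fun _ => (r : Rmax)
  obtain ⟨x, hx⟩ := exists_forall_mem_iff_mpBracket_nonpos (D := {w | (w, g') ∈ W})
    (hcl.preimage (Continuous.prodMk_left g'))
    (fun w w' hw' hw => hW.1.trans (hW.2 w' w hw') hw)
    (fun w hw w' hw' => by simpa only [mem_ofPred_eq, sup_idem] using hW.1.sup_mem hw hw')
    (hW.1.refl g') (fun i => ne_bot_of_le_ne_bot WithBot.coe_ne_bot le_sup_right)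
  refine hr ((hx f).2 ?_)
  calc mpBracket f x ≤ mpBracket g x := hfg x (hW.1.mem_mpDiamond hx)
    _ ≤ mpBracket g' x := mpBracket_mono_left x le_sup_left
    _ ≤ 0 := (hx g').1 (hW.1.refl g')

end Duality

section Congruence

variable {n : ℕ} {W : Set (RmaxVec n × RmaxVec n)}

/-- `(f, g) ∈ leMod W` says that `f ≤ g` modulo `W`, i.e. `f ⊕ g ≡ g`. -/
def leMod (W : Set (RmaxVec n × RmaxVec n)) : Set (RmaxVec n × RmaxVec n) :=
  {p | (p.1 ⊔ p.2, p.2) ∈ W}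

lemma maxComb_sup_sup (u v u' v' : RmaxVec n) (lam mu : Rmax) :
    maxComb (u ⊔ v) (u' ⊔ v') lam mu = maxComb u u' lam mu ⊔ maxComb v v' lam mu := by
  funext i
  simp only [maxComb, Pi.sup_apply, ← max_add_add_right]
  exact max_max_max_comm _ _ _ _

lemma IsClosed.leMod (hW : IsClosed W) : IsClosed (leMod W) := by
  have hsup : Continuous fun p : RmaxVec n × RmaxVec n => p.1 ⊔ p.2 :=
    continuous_pi fun i => ((continuous_apply i).comp continuous_fst).max
      ((continuous_apply i).comp continuous_snd)
  exact hW.preimage (hsup.prodMk continuous_snd)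

namespace IsCongruence

variable (hW : IsCongruence W)
include hW

lemma isPolarCone_leMod : IsPolarCone (leMod W) := by
  refine ⟨⟨fun p hp q hq lam mu => ?_, fun f => ?_, fun u v w huv hvw => ?_⟩, fun f g hfg => ?_⟩
  · simpa only [leMod, mem_ofPred_eq, maxComb_sup_sup] using hW.1.1 _ hp _ hq lam mu
  · simpa only [leMod, mem_ofPred_eq, sup_idem] using hW.1.refl f
  · have h₁ : (u ⊔ v ⊔ w, w) ∈ W := hW.1.trans (hW.1.sup_mem huv (hW.1.refl w)) hvw
    have h₂ : (u ⊔ w, u ⊔ v ⊔ w) ∈ W := by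
      simpa only [sup_assoc] using hW.1.sup_mem (hW.1.refl u) (hW.2 _ _ hvw)
    exact hW.1.trans h₂ h₁
  · simpa only [leMod, mem_ofPred_eq, sup_eq_right.2 hfg] using hW.1.refl g

lemma mem_leMod {f g : RmaxVec n} (h : (f, g) ∈ W) : (f, g) ∈ leMod W := by
  simpa only [leMod, mem_ofPred_eq, sup_idem] using hW.1.sup_mem h (hW.1.refl g)

lemma mem_of_mem_leMod {f g : RmaxVec n} (hfg : (f, g) ∈ leMod W) (hgf : (g, f) ∈ leMod W) :
    (f, g) ∈ W :=
  hW.1.trans (hW.2 _ _ (sup_comm g f ▸ hgf)) hfg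

lemma mpDiamond_leMod : mpDiamond (leMod W) = mpTop W := by
  ext x
  refine ⟨fun hx p hp => le_antisymm (hx _ (hW.mem_leMod hp)) (hx _ (hW.mem_leMod (hW.2 _ _ hp))),
    fun hx p hp => ?_⟩
  calc mpBracket p.1 x ≤ mpBracket (p.1 ⊔ p.2) x := mpBracket_mono_left x le_sup_left
    _ = mpBracket p.2 x := hx _ hp

theorem mpOrtho_mpTop_subset (hcl : IsClosed W) : mpOrtho (mpTop W) ⊆ W := by
  rintro ⟨f, g⟩ hfg
  have hsub := hW.isPolarCone_leMod.mpPolar_mpDiamond_subset hcl.leMod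
  rw [hW.mpDiamond_leMod] at hsub
  exact hW.mem_of_mem_leMod (hsub fun x hx => (hfg x hx).le) (hsub fun x hx => (hfg x hx).ge)

end IsCongruence

end Congruence

/-- Corollary of Theorem 4.6 of the paper: for any `U ⊆ (ℝmax^n)²`, `(U⋄)°` is
the smallest closed polar cone containing `U`, and `(U⊤)⊥` is the smallest
closed congruence containing `U`. -/
theorem smallest_closed_polar_cone_and_congruence (n : ℕ)
    (U : Set (RmaxVec n × RmaxVec n)) :
    ((IsClosed (mpPolar (mpDiamond U)) ∧ IsPolarCone (mpPolar (mpDiamond U))) ∧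
      U ⊆ mpPolar (mpDiamond U) ∧
      (∀ W : Set (RmaxVec n × RmaxVec n), IsClosed W → IsPolarCone W →
        U ⊆ W → mpPolar (mpDiamond U) ⊆ W)) ∧
    ((IsClosed (mpOrtho (mpTop U)) ∧ IsCongruence (mpOrtho (mpTop U))) ∧
      U ⊆ mpOrtho (mpTop U) ∧
      (∀ W : Set (RmaxVec n × RmaxVec n), IsClosed W → IsCongruence W →
        U ⊆ W → mpOrtho (mpTop U) ⊆ W)) :=
  ⟨⟨⟨isClosed_mpPolar _, isPolarCone_mpPolar _⟩, subset_mpPolar_mpDiamond U,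
      fun _ hcl hW hUW => (mpPolar_mpDiamond_mono hUW).trans (hW.mpPolar_mpDiamond_subset hcl)⟩,
    ⟨⟨isClosed_mpOrtho _, isCongruence_mpOrtho _⟩, subset_mpOrtho_mpTop U,
      fun _ hcl hW hUW => (mpOrtho_mpTop_mono hUW).trans (hW.mpOrtho_mpTop_subset hcl)⟩⟩
end
end
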